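/- Let p > 2. Then the function f(x) = tan_p(x)^(p−2) − tanh_p(x)^(p−2) is strictly increasing on the interval (0, π_p/2). -/

import Mathlib

/-!
On `(0, π_p/2)` the functions `T = tan_p` and `H = tanh_p` solve `T' = 1 + Tᵖ` and
`H' = 1 - Hᵖ` with `T(0) = H(0) = 0`. Hence `(T - H)' = Tᵖ + Hᵖ > 0` gives `H < T`, and
`(H T' - T H')' = H T'' - T H'' = p H T^(p-1) T' + p T H^(p-1) H' > 0` gives `H'/H < T'/T`.
Since `f' = (p - 2) (T^(p-2) · T'/T - H^(p-2) · H'/H)`, both factors compare the right way and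
`f' > 0` when `p > 2`.
-/

open Real Set Filter Topology

/-- Generalized inverse sine: `arcsin_p x = ∫₀ˣ (1 - tᵖ)^(-1/p) dt`. -/
noncomputable def arcsinp (p : ℝ) (x : ℝ) : ℝ := ∫ t in (0:ℝ)..x, (1 - t ^ p) ^ (-1 / p)

/-- Generalized π: `π_p = 2 · arcsin_p 1`. -/
noncomputable def pip (p : ℝ) : ℝ := 2 * arcsinp p 1

/-- Generalized sine: the inverse of `arcsinp p` (as a map from `[0,1]`). -/
noncomputable def sinp (p : ℝ) : ℝ → ℝ := Function.invFunOn (arcsinp p) (Set.Icc 0 1)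

/-- Generalized cosine. -/
noncomputable def cosp (p : ℝ) (x : ℝ) : ℝ := (1 - (sinp p x) ^ p) ^ (1 / p)

/-- Generalized tangent. -/
noncomputable def tanp (p : ℝ) (x : ℝ) : ℝ := sinp p x / cosp p x

/-- Generalized inverse hyperbolic sine: `arsinh_p x = ∫₀ˣ (1 + tᵖ)^(-1/p) dt`. -/
noncomputable def arsinhp (p : ℝ) (x : ℝ) : ℝ := ∫ t in (0:ℝ)..x, (1 + t ^ p) ^ (-1 / p)

/-- Generalized hyperbolic sine: the inverse of `arsinhp p` (as a map from `[0,∞)`). -/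
noncomputable def sinhp (p : ℝ) : ℝ → ℝ := Function.invFunOn (arsinhp p) (Set.Ici 0)

/-- Generalized hyperbolic cosine. -/
noncomputable def coshp (p : ℝ) (x : ℝ) : ℝ := (1 + (sinhp p x) ^ p) ^ (1 / p)

/-- Generalized hyperbolic tangent. -/
noncomputable def tanhp (p : ℝ) (x : ℝ) : ℝ := sinhp p x / coshp p x

open Function MeasureTheory

theorem strictMonoOn_of_hasDerivAt_pos {D : Set ℝ} (hD : Convex ℝ D) {f f' : ℝ → ℝ}
    (hf : ContinuousOn f D) (hf' : ∀ x ∈ interior D, HasDerivAt f (f' x) x)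
    (hpos : ∀ x ∈ interior D, 0 < f' x) : StrictMonoOn f D :=
  strictMonoOn_of_hasDerivWithinAt_pos hD hf (fun x hx => (hf' x hx).hasDerivWithinAt) hpos

theorem strictMonoOn_Ico_of_hasDerivAt_pos {f f' : ℝ → ℝ} {a b : ℝ}
    (hf : ContinuousWithinAt f (Ici a) a) (hf' : ∀ x ∈ Ioo a b, HasDerivAt f (f' x) x)
    (hpos : ∀ x ∈ Ioo a b, 0 < f' x) : StrictMonoOn f (Ico a b) := by
  refine strictMonoOn_of_hasDerivAt_pos (convex_Ico a b) (fun x hx => ?_)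
    (by simpa using hf') (by simpa using hpos)
  rcases hx.1.eq_or_lt with rfl | hax
  · exact hf.mono Ico_subset_Ici_self
  · exact (hf' x ⟨hax, hx.2⟩).continuousAt.continuousWithinAt

namespace StrictMonoOn

variable {f : ℝ → ℝ} {s : Set ℝ} {x : ℝ}

theorem strictMonoOn_invFunOn (hf : StrictMonoOn f s) : StrictMonoOn (invFunOn f s) (f '' s) := by
  rintro _ ⟨a, ha, rfl⟩ _ ⟨b, hb, rfl⟩ hab
  rw [hf.injOn.leftInvOn_invFunOn ha, hf.injOn.leftInvOn_invFunOn hb]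
  exact (hf.lt_iff_lt ha hb).1 hab

theorem continuousAt_invFunOn (hf : StrictMonoOn f s) (hs : s ∈ 𝓝 x)
    (hfs : f '' s ∈ 𝓝 (f x)) :
    ContinuousAt (invFunOn f s) (f x) := by
  refine hf.strictMonoOn_invFunOn.continuousAt_of_image_mem_nhds hfs ?_
  rwa [hf.injOn.invFunOn_image subset_rfl, hf.injOn.leftInvOn_invFunOn (mem_of_mem_nhds hs)]

theorem continuousWithinAt_invFunOn (hf : StrictMonoOn f s) (hs : s ∈ 𝓝[≥] x)
    (hfs : f '' s ∈ 𝓝[≥] f x) : ContinuousWithinAt (invFunOn f s) (Ici (f x)) (f x) := by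
  refine hf.strictMonoOn_invFunOn.continuousWithinAt_right_of_image_mem_nhdsWithin hfs ?_
  rwa [hf.injOn.invFunOn_image subset_rfl,
    hf.injOn.leftInvOn_invFunOn (mem_of_mem_nhdsWithin self_mem_Ici hs)]

theorem hasDerivAt_invFunOn {f' : ℝ} (hf : StrictMonoOn f s) (hs : s ∈ 𝓝 x)
    (hfs : f '' s ∈ 𝓝 (f x)) (hd : HasDerivAt f f' x) (hf' : f' ≠ 0) :
    HasDerivAt (invFunOn f s) f'⁻¹ (f x) := by
  refine HasDerivAt.of_local_left_inverse (f := f) (hf.continuousAt_invFunOn hs hfs) ?_ hf' ?_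
  · rwa [hf.injOn.leftInvOn_invFunOn (mem_of_mem_nhds hs)]
  · filter_upwards [hfs] with y hy using invFunOn_eq hy

end StrictMonoOn

structure IsTanTanhPair (p a : ℝ) (T H : ℝ → ℝ) : Prop where
  T_zero : T 0 = 0
  H_zero : H 0 = 0
  continuousWithinAt_T : ContinuousWithinAt T (Ici 0) 0
  continuousWithinAt_H : ContinuousWithinAt H (Ici 0) 0
  hasDerivAt_T : ∀ x ∈ Ioo 0 a, HasDerivAt T (1 + T x ^ p) x
  hasDerivAt_H : ∀ x ∈ Ioo 0 a, HasDerivAt H (1 - H x ^ p) x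
  T_pos : ∀ x ∈ Ioo 0 a, 0 < T x
  H_pos : ∀ x ∈ Ioo 0 a, 0 < H x
  H_lt_one : ∀ x ∈ Ioo 0 a, H x < 1

namespace IsTanTanhPair

variable {p a x : ℝ} {T H : ℝ → ℝ}

theorem H_lt_T (h : IsTanTanhPair p a T H) (hx : x ∈ Ioo 0 a) : H x < T x := by
  have hmono := strictMonoOn_Ico_of_hasDerivAt_pos (f := fun y => T y - H y)
    (h.continuousWithinAt_T.sub h.continuousWithinAt_H)
    (fun y hy => (h.hasDerivAt_T y hy).sub (h.hasDerivAt_H y hy)) fun y hy => by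
      have := Real.rpow_pos_of_pos (h.T_pos y hy) p
      have := Real.rpow_pos_of_pos (h.H_pos y hy) p
      linarith
  have := hmono (left_mem_Ico.2 (hx.1.trans hx.2)) (Ioo_subset_Ico_self hx) hx.1
  simp only [h.T_zero, h.H_zero, sub_zero, sub_pos] at this
  exact this

theorem one_sub_rpow_div_lt_one_add_rpow_div (h : IsTanTanhPair p a T H) (hp : 0 < p)
    (hx : x ∈ Ioo 0 a) : (1 - H x ^ p) / H x < (1 + T x ^ p) / T x := by
  have hTc := h.continuousWithinAt_T
  have hHc := h.continuousWithinAt_H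
  have hmono := strictMonoOn_Ico_of_hasDerivAt_pos
    (f := fun y => H y * (1 + T y ^ p) - T y * (1 - H y ^ p))
    (f' := fun y => p * H y * T y ^ (p - 1) * (1 + T y ^ p)
      + p * T y * H y ^ (p - 1) * (1 - H y ^ p))
    ((hHc.mul (continuousWithinAt_const.add (hTc.rpow_const (Or.inr hp.le)))).sub
      (hTc.mul (continuousWithinAt_const.sub (hHc.rpow_const (Or.inr hp.le)))))
    (fun y hy => by
      have hT := h.hasDerivAt_T y hy
      have hH := h.hasDerivAt_H y hy
      refine ((hH.mul ((hT.rpow_const (Or.inl (h.T_pos y hy).ne')).const_add 1)).sub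
        (hT.mul ((hH.rpow_const (Or.inl (h.H_pos y hy).ne')).const_sub 1))).congr_deriv ?_
      ring)
    fun y hy => by
      have := h.T_pos y hy
      have := h.H_pos y hy
      have : H y ^ p < 1 := Real.rpow_lt_one this.le (h.H_lt_one y hy) hp
      have : 0 < 1 - H y ^ p := by linarith
      positivity
  have := hmono (left_mem_Ico.2 (hx.1.trans hx.2)) (Ioo_subset_Ico_self hx) hx.1
  simp only [h.T_zero, h.H_zero, zero_mul, sub_zero, sub_pos] at this
  rw [div_lt_div_iff₀ (h.H_pos x hx) (h.T_pos x hx)]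
  linarith

theorem strictMonoOn_rpow_sub_rpow (h : IsTanTanhPair p a T H) (hp : 2 < p) :
    StrictMonoOn (fun x => T x ^ (p - 2) - H x ^ (p - 2)) (Ioo 0 a) := by
  have hderiv : ∀ x ∈ Ioo 0 a, HasDerivAt (fun x => T x ^ (p - 2) - H x ^ (p - 2))
      ((p - 2) * (T x ^ (p - 2) * ((1 + T x ^ p) / T x)
        - H x ^ (p - 2) * ((1 - H x ^ p) / H x))) x := fun x hx => by
    have hT := h.T_pos x hx
    have hH := h.H_pos x hx
    refine (((h.hasDerivAt_T x hx).rpow_const (Or.inl hT.ne')).sub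
      ((h.hasDerivAt_H x hx).rpow_const (Or.inl hH.ne'))).congr_deriv ?_
    rw [Real.rpow_sub_one hT.ne', Real.rpow_sub_one hH.ne']
    ring
  refine strictMonoOn_of_hasDerivAt_pos (convex_Ioo 0 a)
    (fun x hx => (hderiv x hx).continuousAt.continuousWithinAt) (by simpa using hderiv) ?_
  rw [interior_Ioo]
  intro x hx
  have hH := h.H_pos x hx
  have hpow : H x ^ (p - 2) < T x ^ (p - 2) :=
    Real.rpow_lt_rpow hH.le (h.H_lt_T hx) (by linarith)
  have hlog := h.one_sub_rpow_div_lt_one_add_rpow_div (by linarith) hx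
  have hHp : H x ^ p < 1 := Real.rpow_lt_one hH.le (h.H_lt_one x hx) (by linarith)
  have hH' : 0 < (1 - H x ^ p) / H x := div_pos (by linarith) hH
  exact mul_pos (by linarith) (sub_pos.2 (mul_lt_mul'' hpow hlog (by positivity) hH'.le))

end IsTanTanhPair

section GeneralizedTrigonometric

variable {p x : ℝ}

theorem arcsinp_zero (p : ℝ) : arcsinp p 0 = 0 := by
  simp [arcsinp]

theorem arcsinp_one (p : ℝ) : arcsinp p 1 = pip p / 2 := by
  rw [pip]; ring

/-- The singularity at `t = 1` is dominated by `(1 - t)^(-1/p)`, integrable since `p > 1`. -/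
theorem intervalIntegrable_arcsinp_integrand (hp : 1 < p) :
    IntervalIntegrable (fun t : ℝ => (1 - t ^ p) ^ (-1 / p)) volume 0 1 := by
  have hp0 : 0 < p := by linarith
  have hexp : -1 < -1 / p := by
    rw [neg_div, neg_lt_neg_iff, div_lt_one hp0]; exact hp
  have hdom : IntervalIntegrable (fun t : ℝ => (1 - t) ^ (-1 / p)) volume 0 1 := by
    have h := intervalIntegral.intervalIntegrable_rpow' hexp (a := 0) (b := 1)
    simpa using (h.comp_sub_left 1).symm
  refine hdom.mono_fun (Measurable.aestronglyMeasurable (by fun_prop)) ?_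
  rw [EventuallyLE, ae_restrict_iff' measurableSet_uIoc]
  filter_upwards with t ht
  rw [uIoc_of_le zero_le_one] at ht
  have htp : t ^ p ≤ t := by
    simpa using Real.rpow_le_rpow_of_exponent_ge ht.1 ht.2 hp.le
  have hbase : 0 ≤ 1 - t ^ p := by linarith [ht.2]
  rw [Real.norm_of_nonneg (Real.rpow_nonneg hbase _),
    Real.norm_of_nonneg (Real.rpow_nonneg (by linarith [ht.2]) _)]
  rcases ht.2.eq_or_lt with rfl | ht1
  · simp
  · exact Real.rpow_le_rpow_of_nonpos (by linarith) (by linarith)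
      (div_nonpos_of_nonpos_of_nonneg (by norm_num) hp0.le)

theorem continuousOn_arcsinp (hp : 1 < p) : ContinuousOn (arcsinp p) (Icc 0 1) := by
  rw [← uIcc_of_le zero_le_one]
  exact intervalIntegral.continuousOn_primitive_interval'
    (intervalIntegrable_arcsinp_integrand hp) left_mem_uIcc

theorem hasDerivAt_arcsinp (hp : 1 < p) (hx : x ∈ Ioo 0 1) :
    HasDerivAt (arcsinp p) ((1 - x ^ p) ^ (-1 / p)) x := by
  have hxp : x ^ p < 1 := Real.rpow_lt_one hx.1.le hx.2 (by linarith)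
  refine intervalIntegral.integral_hasDerivAt_right
    ((intervalIntegrable_arcsinp_integrand hp).mono_set ?_)
    (Measurable.stronglyMeasurable (by fun_prop)).stronglyMeasurableAtFilter ?_
  · rw [uIcc_of_le hx.1.le, uIcc_of_le zero_le_one]
    exact Icc_subset_Icc_right hx.2.le
  · have hbase : ContinuousAt (fun t : ℝ => 1 - t ^ p) x :=
      (continuous_const.sub (Real.continuous_rpow_const (by linarith))).continuousAt
    exact hbase.rpow_const (Or.inl (by linarith))

theorem strictMonoOn_arcsinp (hp : 1 < p) : StrictMonoOn (arcsinp p) (Icc 0 1) := by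
  refine strictMonoOn_of_hasDerivAt_pos (convex_Icc 0 1) (continuousOn_arcsinp hp)
    (by simpa using fun x hx => hasDerivAt_arcsinp hp hx) ?_
  rw [interior_Icc]
  intro x hx
  exact Real.rpow_pos_of_pos (by linarith [Real.rpow_lt_one hx.1.le hx.2 (by linarith : 0 < p)]) _

theorem image_arcsinp (hp : 1 < p) : arcsinp p '' Icc 0 1 = Icc 0 (pip p / 2) := by
  rw [(continuousOn_arcsinp hp).image_Icc_of_monotoneOn zero_le_one
    (strictMonoOn_arcsinp hp).monotoneOn, arcsinp_zero, arcsinp_one]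

theorem pip_pos (hp : 1 < p) : 0 < pip p := by
  have := strictMonoOn_arcsinp hp (left_mem_Icc.2 zero_le_one) (right_mem_Icc.2 zero_le_one)
    zero_lt_one
  rw [arcsinp_zero, arcsinp_one] at this
  linarith

theorem sinp_arcsinp (hp : 1 < p) (hx : x ∈ Icc 0 1) : sinp p (arcsinp p x) = x :=
  (strictMonoOn_arcsinp hp).injOn.leftInvOn_invFunOn hx

theorem arcsinp_sinp (hp : 1 < p) (hx : x ∈ Icc 0 (pip p / 2)) : arcsinp p (sinp p x) = x := by
  rw [← image_arcsinp hp] at hx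
  exact invFunOn_eq hx

theorem sinp_zero (hp : 1 < p) : sinp p 0 = 0 := by
  simpa [arcsinp_zero] using sinp_arcsinp hp (left_mem_Icc.2 zero_le_one)

theorem sinp_pip_half (hp : 1 < p) : sinp p (pip p / 2) = 1 := by
  simpa [arcsinp_one] using sinp_arcsinp hp (right_mem_Icc.2 zero_le_one)

theorem sinp_mem_Ioo (hp : 1 < p) (hx : x ∈ Ioo 0 (pip p / 2)) : sinp p x ∈ Ioo 0 1 := by
  have hmono := (strictMonoOn_arcsinp hp).strictMonoOn_invFunOn
  rw [image_arcsinp hp] at hmono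
  have hpip : 0 ≤ pip p / 2 := by linarith [pip_pos hp]
  have h0 := hmono (left_mem_Icc.2 hpip) (Ioo_subset_Icc_self hx) hx.1
  have h1 := hmono (Ioo_subset_Icc_self hx) (right_mem_Icc.2 hpip) hx.2
  exact ⟨sinp_zero hp ▸ h0, sinp_pip_half hp ▸ h1⟩

theorem sinp_rpow_lt_one (hp : 1 < p) (hx : x ∈ Ioo 0 (pip p / 2)) : sinp p x ^ p < 1 :=
  Real.rpow_lt_one (sinp_mem_Ioo hp hx).1.le (sinp_mem_Ioo hp hx).2 (by linarith)

theorem continuousWithinAt_sinp_zero (hp : 1 < p) : ContinuousWithinAt (sinp p) (Ici 0) 0 := by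
  have h := (strictMonoOn_arcsinp hp).continuousWithinAt_invFunOn (x := 0)
    (Icc_mem_nhdsGE zero_lt_one) ?_
  · rwa [arcsinp_zero] at h
  · rw [image_arcsinp hp, arcsinp_zero]
    exact Icc_mem_nhdsGE (by linarith [pip_pos hp])

theorem hasDerivAt_sinp (hp : 1 < p) (hx : x ∈ Ioo 0 (pip p / 2)) :
    HasDerivAt (sinp p) (cosp p x) x := by
  have hs := sinp_mem_Ioo hp hx
  have hbase : 0 < 1 - sinp p x ^ p := by linarith [sinp_rpow_lt_one hp hx]
  have h := (strictMonoOn_arcsinp hp).hasDerivAt_invFunOn (Icc_mem_nhds hs.1 hs.2) ?_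
    (hasDerivAt_arcsinp hp hs) (Real.rpow_pos_of_pos hbase _).ne'
  · rwa [arcsinp_sinp hp (Ioo_subset_Icc_self hx), neg_div, Real.rpow_neg hbase.le, inv_inv]
      at h
  · rw [image_arcsinp hp, arcsinp_sinp hp (Ioo_subset_Icc_self hx)]
    exact Icc_mem_nhds hx.1 hx.2

theorem arsinhp_zero (p : ℝ) : arsinhp p 0 = 0 := by
  simp [arsinhp]

theorem continuousAt_arsinhp_integrand (hp : 0 < p) (hx : 0 ≤ x) :
    ContinuousAt (fun t : ℝ => (1 + t ^ p) ^ (-1 / p)) x := by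
  have hbase : ContinuousAt (fun t : ℝ => 1 + t ^ p) x :=
    (continuous_const.add (Real.continuous_rpow_const hp.le)).continuousAt
  exact hbase.rpow_const (Or.inl (by positivity))

theorem hasDerivAt_arsinhp (hp : 0 < p) (hx : 0 ≤ x) :
    HasDerivAt (arsinhp p) ((1 + x ^ p) ^ (-1 / p)) x := by
  refine intervalIntegral.integral_hasDerivAt_right ?_
    (Measurable.stronglyMeasurable (by fun_prop)).stronglyMeasurableAtFilter
    (continuousAt_arsinhp_integrand hp hx)
  refine ContinuousOn.intervalIntegrable fun t ht => ?_
  rw [uIcc_of_le hx] at ht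
  exact (continuousAt_arsinhp_integrand hp ht.1).continuousWithinAt

theorem continuousOn_arsinhp (hp : 0 < p) : ContinuousOn (arsinhp p) (Ici 0) :=
  fun _ hx => (hasDerivAt_arsinhp hp hx).continuousAt.continuousWithinAt

theorem strictMonoOn_arsinhp (hp : 0 < p) : StrictMonoOn (arsinhp p) (Ici 0) :=
  strictMonoOn_of_hasDerivAt_pos (convex_Ici 0) (continuousOn_arsinhp hp)
    (fun _ hx => hasDerivAt_arsinhp hp (interior_subset hx)) fun x hx => by
      have : 0 ≤ x := interior_subset hx
      positivity

/-- The integrand is at least `1 / (1 + t)` since `(1 + tᵖ)^(1/p) ≤ 1 + t`. -/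
theorem log_one_add_le_arsinhp (hp : 1 ≤ p) (hx : 0 ≤ x) : log (1 + x) ≤ arsinhp p x := by
  have hp0 : 0 < p := by linarith
  have hint : ∫ t in (0:ℝ)..x, (1 + t)⁻¹ = log (1 + x) := by
    rw [intervalIntegral.integral_comp_add_left (fun t => t⁻¹), integral_inv (by
      rw [uIcc_of_le (by linarith)]; intro h; linarith [h.1])]
    simp
  rw [← hint, arsinhp]
  refine intervalIntegral.integral_mono_on hx ?_ ?_ fun t ht => ?_
  · refine (ContinuousOn.inv₀ (by fun_prop) fun t ht => ?_).intervalIntegrable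
    rw [uIcc_of_le hx] at ht
    exact (by linarith [ht.1] : (0:ℝ) < 1 + t).ne'
  · refine ContinuousOn.intervalIntegrable fun t ht => ?_
    rw [uIcc_of_le hx] at ht
    exact (continuousAt_arsinhp_integrand hp0 ht.1).continuousWithinAt
  · have hnorm : (1 + t ^ p) ^ (1 / p) ≤ 1 + t := by
      simpa using Real.rpow_add_rpow_le_add zero_le_one ht.1 hp
    rw [neg_div, Real.rpow_neg (by positivity [ht.1])]
    exact inv_anti₀ (Real.rpow_pos_of_pos (by positivity [ht.1]) _) hnorm

theorem image_arsinhp (hp : 1 < p) : arsinhp p '' Ici 0 = Ici 0 := by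
  have hp0 : 0 < p := by linarith
  refine subset_antisymm ?_ fun y (hy : 0 ≤ y) => ?_
  · rintro _ ⟨x, hx, rfl⟩
    simpa [arsinhp_zero] using (strictMonoOn_arsinhp hp0).monotoneOn self_mem_Ici hx hx
  · set R := exp y - 1
    have hR : 0 ≤ R := by simp [R, Real.one_le_exp hy]
    have hyR : y ≤ arsinhp p R := by
      simpa [R] using log_one_add_le_arsinhp hp.le hR
    obtain ⟨x, hx, rfl⟩ := intermediate_value_Icc hR
      ((continuousOn_arsinhp hp0).mono Icc_subset_Ici_self)
      ⟨by rwa [arsinhp_zero], hyR⟩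
    exact ⟨x, hx.1, rfl⟩

theorem sinhp_arsinhp (hp : 0 < p) (hx : 0 ≤ x) : sinhp p (arsinhp p x) = x :=
  (strictMonoOn_arsinhp hp).injOn.leftInvOn_invFunOn hx

theorem arsinhp_sinhp (hp : 1 < p) (hx : 0 ≤ x) : arsinhp p (sinhp p x) = x := by
  rw [← mem_Ici, ← image_arsinhp hp] at hx
  exact invFunOn_eq hx

theorem sinhp_zero (hp : 0 < p) : sinhp p 0 = 0 := by
  simpa [arsinhp_zero] using sinhp_arsinhp hp le_rfl

theorem sinhp_pos (hp : 1 < p) (hx : 0 < x) : 0 < sinhp p x := by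
  have hp0 : 0 < p := by linarith
  have hmono := (strictMonoOn_arsinhp hp0).strictMonoOn_invFunOn
  rw [image_arsinhp hp] at hmono
  exact sinhp_zero hp0 ▸ hmono self_mem_Ici hx.le hx

theorem continuousWithinAt_sinhp_zero (hp : 1 < p) : ContinuousWithinAt (sinhp p) (Ici 0) 0 := by
  have h := (strictMonoOn_arsinhp (p := p) (by linarith)).continuousWithinAt_invFunOn (x := 0)
    self_mem_nhdsWithin (by rw [image_arsinhp hp, arsinhp_zero]; exact self_mem_nhdsWithin)
  rwa [arsinhp_zero] at h

theorem hasDerivAt_sinhp (hp : 1 < p) (hx : 0 < x) : HasDerivAt (sinhp p) (coshp p x) x := by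
  have hp0 : 0 < p := by linarith
  have hs := sinhp_pos hp hx
  have hbase : 0 < 1 + sinhp p x ^ p := by positivity
  have h := (strictMonoOn_arsinhp hp0).hasDerivAt_invFunOn (Ici_mem_nhds hs)
    (by rw [image_arsinhp hp, arsinhp_sinhp hp hx.le]; exact Ici_mem_nhds hx)
    (hasDerivAt_arsinhp hp0 hs.le) (Real.rpow_pos_of_pos hbase _).ne'
  rwa [arsinhp_sinhp hp hx.le, neg_div, Real.rpow_neg hbase.le, inv_inv] at h

/-- `ε = -1` gives `tan_p' = 1 + tan_pᵖ`, `ε = 1` gives `tanh_p' = 1 - tanh_pᵖ`. -/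
theorem hasDerivAt_div_rpow_one_add {S : ℝ → ℝ} {ε : ℝ} (hp : p ≠ 0)
    (hS : HasDerivAt S ((1 + ε * S x ^ p) ^ (1 / p)) x) (hSx : 0 < S x)
    (hq : 0 < 1 + ε * S x ^ p) :
    HasDerivAt (fun y => S y / (1 + ε * S y ^ p) ^ (1 / p))
      (1 - ε * (S x / (1 + ε * S x ^ p) ^ (1 / p)) ^ p) x := by
  set s := S x
  set q := 1 + ε * s ^ p
  set c := q ^ (1 / p) with hc_def
  have hc : 0 < c := Real.rpow_pos_of_pos hq _
  have hcp : c ^ p = q := by rw [hc_def, one_div, Real.rpow_inv_rpow hq.le hp]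
  have hC : HasDerivAt (fun y => (1 + ε * S y ^ p) ^ (1 / p))
      (ε * (s ^ p / s) * c * (c / q)) x := by
    refine (((hS.rpow_const (Or.inl hSx.ne')).const_mul ε).const_add 1).rpow_const
      (Or.inl hq.ne') |>.congr_deriv ?_
    rw [Real.rpow_sub_one hSx.ne', Real.rpow_sub_one hq.ne', ← hc_def]
    field_simp
  refine (hS.div hC hc.ne').congr_deriv ?_
  change (c * c - s * (ε * (s ^ p / s) * c * (c / q))) / c ^ 2 = 1 - ε * (s / c) ^ p
  rw [Real.div_rpow hSx.le hc.le, hcp]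
  field_simp

theorem hasDerivAt_tanp (hp : 1 < p) (hx : x ∈ Ioo 0 (pip p / 2)) :
    HasDerivAt (tanp p) (1 + tanp p x ^ p) x := by
  have hS : HasDerivAt (sinp p) ((1 + -1 * sinp p x ^ p) ^ (1 / p)) x := by
    simpa [cosp, ← sub_eq_add_neg] using hasDerivAt_sinp hp hx
  have h := hasDerivAt_div_rpow_one_add (by linarith) hS (sinp_mem_Ioo hp hx).1
    (by linarith [sinp_rpow_lt_one hp hx])
  convert h using 1
  · ext y; simp [tanp, cosp, sub_eq_add_neg]
  · simp [tanp, cosp, sub_eq_add_neg]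

theorem hasDerivAt_tanhp (hp : 1 < p) (hx : 0 < x) :
    HasDerivAt (tanhp p) (1 - tanhp p x ^ p) x := by
  have hS : HasDerivAt (sinhp p) ((1 + 1 * sinhp p x ^ p) ^ (1 / p)) x := by
    simpa [coshp] using hasDerivAt_sinhp hp hx
  have hs := sinhp_pos hp hx
  have h := hasDerivAt_div_rpow_one_add (by linarith) hS hs (by positivity)
  convert h using 1
  · ext y; simp [tanhp, coshp]
  · simp [tanhp, coshp]

theorem tanp_zero (hp : 1 < p) : tanp p 0 = 0 := by
  simp [tanp, sinp_zero hp]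

theorem tanhp_zero (hp : 0 < p) : tanhp p 0 = 0 := by
  simp [tanhp, sinhp_zero hp]

theorem continuousWithinAt_tanp_zero (hp : 1 < p) : ContinuousWithinAt (tanp p) (Ici 0) 0 := by
  have hs := continuousWithinAt_sinp_zero hp
  have hc : ContinuousWithinAt (cosp p) (Ici 0) 0 :=
    (continuousWithinAt_const.sub (hs.rpow_const (Or.inr (by linarith)))).rpow_const
      (Or.inr (by positivity))
  exact hs.div hc (by simp [cosp, sinp_zero hp, Real.zero_rpow (by linarith : p ≠ 0)])

theorem continuousWithinAt_tanhp_zero (hp : 1 < p) : ContinuousWithinAt (tanhp p) (Ici 0) 0 := by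
  have hs := continuousWithinAt_sinhp_zero hp
  have hc : ContinuousWithinAt (coshp p) (Ici 0) 0 :=
    (continuousWithinAt_const.add (hs.rpow_const (Or.inr (by linarith)))).rpow_const
      (Or.inr (by positivity))
  exact hs.div hc
    (by simp [coshp, sinhp_zero (by linarith : 0 < p), Real.zero_rpow (by linarith : p ≠ 0)])

theorem tanp_pos (hp : 1 < p) (hx : x ∈ Ioo 0 (pip p / 2)) : 0 < tanp p x :=
  div_pos (sinp_mem_Ioo hp hx).1 (Real.rpow_pos_of_pos (by linarith [sinp_rpow_lt_one hp hx]) _)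

theorem tanhp_pos (hp : 1 < p) (hx : 0 < x) : 0 < tanhp p x := by
  have hs := sinhp_pos hp hx
  exact div_pos hs (Real.rpow_pos_of_pos (by positivity) _)

theorem tanhp_lt_one (hp : 1 < p) (hx : 0 < x) : tanhp p x < 1 := by
  have hs := sinhp_pos hp hx
  have hsp : sinhp p x = (sinhp p x ^ p) ^ (1 / p) := by
    rw [one_div, Real.rpow_rpow_inv hs.le (by linarith)]
  rw [tanhp, coshp, div_lt_one (Real.rpow_pos_of_pos (by positivity) _)]
  conv_lhs => rw [hsp]
  exact Real.rpow_lt_rpow (by positivity) (by linarith) (by positivity)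

theorem isTanTanhPair_tanp_tanhp (hp : 1 < p) :
    IsTanTanhPair p (pip p / 2) (tanp p) (tanhp p) where
  T_zero := tanp_zero hp
  H_zero := tanhp_zero (by linarith)
  continuousWithinAt_T := continuousWithinAt_tanp_zero hp
  continuousWithinAt_H := continuousWithinAt_tanhp_zero hp
  hasDerivAt_T _ hx := hasDerivAt_tanp hp hx
  hasDerivAt_H _ hx := hasDerivAt_tanhp hp hx.1
  T_pos _ hx := tanp_pos hp hx
  H_pos _ hx := tanhp_pos hp hx.1
  H_lt_one _ hx := tanhp_lt_one hp hx.1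

end GeneralizedTrigonometric

theorem stmt0 (p : ℝ) (hp : 2 < p) :
    StrictMonoOn (fun x => tanp p x ^ (p - 2) - tanhp p x ^ (p - 2))
      (Set.Ioo 0 (pip p / 2)) :=
  (isTanTanhPair_tanp_tanhp (by linarith)).strictMonoOn_rpow_sub_rpow hp
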